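/- arXiv:2501.11386 — 6 statements merged into one kernel-verified Lean document; each statement's English description precedes it below -/
import Mathlib

section
/- There is no sequence of length 6 over the set {1,2,3} that contains every permutation of {1,2,3} as a subsequence; hence the minimum length of a supersequence over a 3-element set is 7. -/
/-- `π` is a permutation of the finite set `A`, viewed as a list listing each
element of `A` exactly once. -/
def IsPermSeq (A : Finset ℕ) (π : List ℕ) : Prop :=
  π.Nodup ∧ π.toFinset = A

/-- `σ` is a supersequence over `A`: a sequence over `A` containing every
permutation of `A` as a subsequence. -/
def IsSupseq (A : Finset ℕ) (σ : List ℕ) : Prop :=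
  (∀ x ∈ σ, x ∈ A) ∧ ∀ π : List ℕ, IsPermSeq A π → π.Sublist σ

/-- `τ` is `k`-complete over `A`: every sequence of `k` distinct letters of `A`
occurs as a subsequence of `τ`. -/
def KComplete (A : Finset ℕ) (k : ℕ) (τ : List ℕ) : Prop :=
  ∀ π : List ℕ, π.Nodup → π.length = k → (∀ x ∈ π, x ∈ A) → π.Sublist τ

/-- `segs` is the segmentation of `σ` over `A`: for each `1 ≤ k ≤ |A|`,
the concatenation of the first `k` segments is the minimum-length initial
substring of `σ` that is `k`-complete. -/
def IsSegmentation (A : Finset ℕ) (σ : List ℕ) (segs : List (List ℕ)) : Prop :=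
  segs.length = A.card ∧ σ = segs.flatten ∧
  ∀ k, 1 ≤ k → k ≤ A.card →
    KComplete A k ((segs.take k).flatten) ∧
    ∀ j < ((segs.take k).flatten).length, ¬ KComplete A k (σ.take j)


/-!
A supersequence shorter than 6 can be padded to one of length exactly 6, so it suffices to
check that none of the `3 ^ 6` words of length 6 over `{1, 2, 3}` contains all six
permutations of `1 2 3`, a finite computation.
-/

-- `permutations'` rather than `permutations`: the latter is defined by well-founded recursion
-- and does not reduce in `decide`.
theorem isPermSeq_toFinset_iff {l π : List ℕ} (hl : l.Nodup) :
    IsPermSeq l.toFinset π ↔ π ∈ l.permutations' := by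
  rw [IsPermSeq, List.mem_permutations']
  constructor
  · rintro ⟨hπ, hset⟩
    refine (List.perm_ext_iff_of_nodup hπ hl).2 fun a => ?_
    rw [← List.mem_toFinset, hset, List.mem_toFinset]
  · intro hperm
    exact ⟨hperm.nodup_iff.2 hl, List.toFinset_eq_of_perm _ _ hperm⟩

theorem isSupseq_toFinset_iff {l σ : List ℕ} (hl : l.Nodup) :
    IsSupseq l.toFinset σ ↔ (∀ x ∈ σ, x ∈ l) ∧ ∀ π ∈ l.permutations', π.Sublist σ := by
  simp only [IsSupseq, List.mem_toFinset, isPermSeq_toFinset_iff hl]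

theorem IsSupseq.of_sublist {A : Finset ℕ} {σ τ : List ℕ} (hσ : IsSupseq A σ)
    (hστ : σ.Sublist τ) (hτ : ∀ x ∈ τ, x ∈ A) : IsSupseq A τ :=
  ⟨hτ, fun π hπ => (hσ.2 π hπ).trans hστ⟩

theorem List.mem_sections_replicate_length {α : Type*} {l τ : List α} :
    τ ∈ (List.replicate τ.length l).sections ↔ ∀ x ∈ τ, x ∈ l := by
  induction τ with
  | nil => simp
  | cons a τ ih =>
    rw [List.mem_sections] at ih ⊢
    simp [List.replicate_succ, ih]

theorem isSupseq_one_two_three_iff {σ : List ℕ} :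
    IsSupseq {1, 2, 3} σ ↔
      (∀ x ∈ σ, x ∈ [1, 2, 3]) ∧ ∀ π ∈ [1, 2, 3].permutations', π.Sublist σ :=
  isSupseq_toFinset_iff (l := [1, 2, 3]) (by decide)

theorem not_isSupseq_one_two_three_of_length_eq_six {σ : List ℕ} (hσ : σ.length = 6) :
    ¬ IsSupseq {1, 2, 3} σ := by
  rw [isSupseq_one_two_three_iff]
  rintro ⟨hmem, hperm⟩
  have no_word_of_length_six : ∀ τ ∈ (List.replicate 6 [1, 2, 3]).sections,
      ∃ π ∈ [1, 2, 3].permutations', ¬ π.Sublist τ := by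
    decide +kernel
  obtain ⟨π, hπ, hnot⟩ :=
    no_word_of_length_six σ (hσ ▸ List.mem_sections_replicate_length.2 hmem)
  exact hnot (hperm π hπ)

theorem IsSupseq.seven_le_length {σ : List ℕ} (h : IsSupseq {1, 2, 3} σ) : 7 ≤ σ.length := by
  by_contra! hlt
  have hlen : (σ ++ List.replicate (6 - σ.length) 1).length = 6 := by
    simp only [List.length_append, List.length_replicate]
    omega
  refine not_isSupseq_one_two_three_of_length_eq_six hlen ?_
  refine h.of_sublist (List.sublist_append_left _ _) ?_
  simp only [List.mem_append, List.mem_replicate]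
  rintro x (hx | ⟨-, rfl⟩)
  · exact h.1 x hx
  · simp

/-- No sequence of length 6 is a supersequence over {1,2,3}; hence the minimum
length of a supersequence over a 3-element set is 7. -/
theorem stmt_1 :
    (¬ ∃ σ : List ℕ, σ.length = 6 ∧ IsSupseq ({1, 2, 3} : Finset ℕ) σ) ∧
    IsLeast {n : ℕ | ∃ σ : List ℕ, IsSupseq ({1, 2, 3} : Finset ℕ) σ ∧ σ.length = n} 7 := by
  refine ⟨fun ⟨σ, h6, hσ⟩ => not_isSupseq_one_two_three_of_length_eq_six h6 hσ,
    ⟨[1, 2, 3, 1, 2, 1, 3], isSupseq_one_two_three_iff.2 (by decide), rfl⟩, ?_⟩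
  rintro n ⟨σ, hσ, rfl⟩
  exact hσ.seven_le_length
end

section
/- For any segment σ_k of the segmentation of a minimum-length supersequence σ over a set of size n, the last element of σ_k occurs exactly once in σ_k; that is, the letter σ_k[-1] does not appear earlier within σ_k. -/
/-!
Suppose the last letter `x` of the `k`-th segment also occurs earlier in that segment. Deleting
the final `x` leaves a prefix of `σ` that is still `k`-complete: a `k`-letter pattern that used
the final `x` ends in `x`, so its first `k - 1` letters embed in the first `k - 1` segments, which
are `(k - 1)`-complete, and its `x` embeds in the earlier occurrence. This contradicts the
minimality of the `k`-th prefix of the segmentation.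
-/

theorem kComplete_zero (A : Finset ℕ) (τ : List ℕ) : KComplete A 0 τ := by
  intro π _ hπ _
  simp [List.length_eq_zero_iff.mp hπ]

theorem KComplete.of_append_singleton {A : Finset ℕ} {k x : ℕ} {Q t : List ℕ}
    (hQ : KComplete A k Q) (hx : x ∈ t) (h : KComplete A (k + 1) (Q ++ t ++ [x])) :
    KComplete A (k + 1) (Q ++ t) := by
  intro π hnd hlen hA
  obtain ⟨a, b, rfl, ha, hb⟩ := List.sublist_append_iff.mp (h π hnd hlen hA)
  rcases List.sublist_singleton.mp hb with rfl | rfl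
  · simpa using ha
  · have haQ : a.Sublist Q :=
      hQ a (List.nodup_append.mp hnd).1 (by simpa using hlen)
        fun y hy => hA y (List.mem_append_left _ hy)
    exact haQ.append (List.singleton_sublist.mpr hx)

theorem List.getLast_mem_dropLast_of_count_ne_one {α : Type*} [BEq α] [LawfulBEq α]
    {l : List α} (hne : l ≠ []) (h : l.count (l.getLast hne) ≠ 1) :
    l.getLast hne ∈ l.dropLast := by
  have hcount := congrArg (List.count (l.getLast hne)) (List.dropLast_concat_getLast hne)
  rw [List.count_append, List.count_singleton_self] at hcount
  exact List.count_pos_iff.mp (by omega)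

theorem List.flatten_take_add_one {α : Type*} (L : List (List α)) {i : ℕ} (hi : i < L.length) :
    (L.take (i + 1)).flatten = (L.take i).flatten ++ L[i] := by
  rw [List.take_add_one, List.getElem?_eq_getElem hi, Option.toList_some, List.flatten_concat]

theorem stmt_7_general (A : Finset ℕ) (σ : List ℕ) (segs : List (List ℕ))
    (hseg : IsSegmentation A σ segs) :
    ∀ s ∈ segs, ∀ h : s ≠ [], s.count (s.getLast h) = 1 := by
  intro s hs hne
  obtain ⟨i, hi, rfl⟩ := List.getElem_of_mem hs
  by_contra hcount
  obtain ⟨hlen, rfl, hK⟩ := hseg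
  set Q := (segs.take i).flatten
  set t := segs[i].dropLast
  have hprefix : Q ++ t ++ [segs[i].getLast hne] = (segs.take (i + 1)).flatten := by
    rw [List.flatten_take_add_one segs hi, List.append_assoc, List.dropLast_concat_getLast]
  have hQ : KComplete A i Q := by
    rcases Nat.eq_zero_or_pos i with rfl | hpos
    · exact kComplete_zero A Q
    · exact (hK i hpos (by omega)).1
  have hcomplete : KComplete A (i + 1) (Q ++ t) :=
    hQ.of_append_singleton (List.getLast_mem_dropLast_of_count_ne_one hne hcount)
      (hprefix ▸ (hK (i + 1) (by omega) (by omega)).1)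
  have hQt_prefix : Q ++ t <+: segs.flatten :=
    (List.prefix_append _ _).trans (hprefix ▸ (List.take_prefix (i + 1) segs).flatten)
  refine (hK (i + 1) (by omega) (by omega)).2 (Q ++ t).length (by simp [← hprefix]) ?_
  rwa [← List.prefix_iff_eq_take.mp hQt_prefix]

/-- In a minimum-length supersequence, the last element of each segment occurs
exactly once in that segment. -/
theorem stmt_7 (A : Finset ℕ) (σ : List ℕ) (segs : List (List ℕ))
    (hσ : IsSupseq A σ)
    (hmin : ∀ τ : List ℕ, IsSupseq A τ → σ.length ≤ τ.length)
    (hseg : IsSegmentation A σ segs) :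
    ∀ s ∈ segs, ∀ h : s ≠ [], s.count (s.getLast h) = 1 :=
  stmt_7_general A σ segs hseg
end

section
/- Let σ be a supersequence over a set A of size n with segmentation σ₁,...,σₙ, and let a be the last appearing letter of A in σ₁ (the letter whose first occurrence in σ₁ is latest). If σ' is obtained from σ by deleting all elements of σ₁ and all occurrences of a, then σ' is a supersequence over A \ {a}. -/
theorem List.Sublist.of_cons_append_of_notMem {α : Type*} {a : α} {l t r : List α}
    (h : (a :: l).Sublist (t ++ r)) (hat : a ∉ t) : (a :: l).Sublist r := by
  obtain ⟨l₁, l₂, hl, h₁, h₂⟩ := List.sublist_append_iff.mp h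
  cases l₁ with
  | nil => simpa [hl] using h₂
  | cons x l₁ =>
    obtain ⟨rfl, -⟩ := List.cons_eq_cons.mp (hl.trans (List.cons_append ..))
    exact absurd (h₁.subset List.mem_cons_self) hat

theorem List.eq_dropLast_append_of_idxOf_le {α : Type*} [DecidableEq α] {l : List α} {a b : α}
    (ha : a ∈ l) (hb : b ∈ l) (hb' : b ∉ l.dropLast) (hba : l.idxOf b ≤ l.idxOf a) :
    l = l.dropLast ++ [a] ∧ a ∉ l.dropLast := by
  have ha' : a ∉ l.dropLast := by
    rw [List.mem_dropLast_iff_idxOf_lt hb] at hb'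
    rw [List.mem_dropLast_iff_idxOf_lt ha]
    omega
  have hl : l ≠ [] := List.ne_nil_of_mem ha
  refine ⟨?_, ha'⟩
  have hdecomp := List.dropLast_append_getLast hl
  have hlast : l.getLast hl = a := by
    rw [← hdecomp, List.mem_append, List.mem_singleton] at ha
    exact (ha.resolve_left ha').symm
  rw [← hlast, hdecomp]

theorem kComplete_one_iff {A : Finset ℕ} {τ : List ℕ} : KComplete A 1 τ ↔ ∀ b ∈ A, b ∈ τ := by
  refine ⟨fun h b hb => List.singleton_sublist.mp (h [b] (by simp) rfl (by simpa)), ?_⟩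
  rintro h π - hπ hπA
  obtain ⟨b, rfl⟩ := List.length_eq_one_iff.mp hπ
  exact List.singleton_sublist.mpr (h b (hπA b (List.mem_singleton_self b)))

namespace IsSegmentation

variable {A : Finset ℕ} {σ s₁ : List ℕ} {rest : List (List ℕ)}

theorem eq_append (hseg : IsSegmentation A σ (s₁ :: rest)) : σ = s₁ ++ rest.flatten := by
  simpa using hseg.2.1

theorem mem_head (hseg : IsSegmentation A σ (s₁ :: rest)) {b : ℕ} (hb : b ∈ A) : b ∈ s₁ := by
  have hcard : 1 ≤ A.card := Finset.card_pos.mpr ⟨b, hb⟩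
  have hcomplete := (hseg.2.2 1 le_rfl hcard).1
  simp only [List.take_succ_cons, List.take_zero, List.flatten_cons, List.flatten_nil,
    List.append_nil] at hcomplete
  exact kComplete_one_iff.mp hcomplete b hb

theorem exists_notMem_dropLast_head (hseg : IsSegmentation A σ (s₁ :: rest))
    (hA : A.Nonempty) : ∃ b ∈ A, b ∉ s₁.dropLast := by
  obtain ⟨a, ha⟩ := hA
  have hlen : 0 < s₁.length := List.length_pos_of_mem (hseg.mem_head ha)
  have hminimal := (hseg.2.2 1 le_rfl (Finset.card_pos.mpr ⟨a, ha⟩)).2 (s₁.length - 1)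
    (by simp [hlen])
  rw [hseg.eq_append, List.take_append_of_le_length (Nat.sub_le _ _), ← List.dropLast_eq_take,
    kComplete_one_iff] at hminimal
  push Not at hminimal
  exact hminimal

end IsSegmentation

theorem IsSupseq.erase_filter_of_eq_append {A : Finset ℕ} {t L : List ℕ} {a : ℕ}
    (hσ : IsSupseq A (t ++ a :: L)) (ha : a ∈ A) (hat : a ∉ t) :
    IsSupseq (A.erase a) (L.filter (· ≠ a)) := by
  refine ⟨fun x hx => ?_, fun π ⟨hπ, hπA⟩ => ?_⟩
  · rw [List.mem_filter, decide_eq_true_iff] at hx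
    exact Finset.mem_erase.mpr ⟨hx.2, hσ.1 x (by simp [hx.1])⟩
  · have hπ_sub : ∀ x ∈ π, x ∈ A.erase a := fun x hx => hπA ▸ List.mem_toFinset.mpr hx
    have haπ : a ∉ π := fun h => by simpa using hπ_sub a h
    have hperm : IsPermSeq A (a :: π) :=
      ⟨List.nodup_cons.mpr ⟨haπ, hπ⟩, by rw [List.toFinset_cons, hπA, Finset.insert_erase ha]⟩
    have hπL : π.Sublist L :=
      List.cons_sublist_cons.mp ((hσ.2 _ hperm).of_cons_append_of_notMem hat)
    have hπ_filter : π.filter (· ≠ a) = π :=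
      List.filter_eq_self.mpr fun x hx => by simpa using (Finset.mem_erase.mp (hπ_sub x hx)).1
    exact hπ_filter ▸ hπL.filter _

/-- Removal operation: deleting the first segment and all occurrences of its
last appearing letter yields a supersequence over `A.erase a`. -/
theorem stmt_8 (A : Finset ℕ) (σ : List ℕ) (s₁ : List ℕ) (rest : List (List ℕ))
    (a : ℕ) (hσ : IsSupseq A σ) (hseg : IsSegmentation A σ (s₁ :: rest))
    (ha : a ∈ A) (hlast : ∀ b ∈ A, s₁.idxOf b ≤ s₁.idxOf a) :
    IsSupseq (A.erase a) ((rest.flatten).filter (· ≠ a)) := by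
  obtain ⟨b, hbA, hb⟩ := hseg.exists_notMem_dropLast_head ⟨a, ha⟩
  obtain ⟨hs₁, has₁⟩ := List.eq_dropLast_append_of_idxOf_le (hseg.mem_head ha) (hseg.mem_head hbA)
    hb (hlast b hbA)
  rw [hseg.eq_append, hs₁, List.append_assoc, List.singleton_append] at hσ
  exact hσ.erase_filter_of_eq_append ha has₁
end

section
/- In any minimum-length supersequence over a set of n ≥ 4 letters, the total length of the first four segments of the segmentation is at least 4n − 4. -/
/-! Only occurrences of letters of the alphabet are counted. A word containing every ordering of
the letters of a `k + 1`-set `B` is split at the first occurrence of the letter `a` of `B` whose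
first occurrence is last: the part after it contains every ordering of `k` letters of `B \ {a}`,
and either `a` occurs again there, or the part before it has the same property. Starting from
nothing this gives the bounds 1, 3, 7, 12 for `k + 1 = 1, 2, 3, 4`. On a larger alphabet, peeling
off such letters four times shows that some letter occurs four times in a 4-complete word, and
removing it from the alphabet keeps the word 4-complete; so each letter beyond the fourth adds at
least 4, for a total of `12 + 4 (n - 4) = 4n - 4`. -/

namespace List

variable {α : Type*}

theorem Sublist.of_cons_sublist_append_cons {a : α} {l v w : List α}
    (h : a :: l <+ v ++ a :: w) (ha : a ∉ v) : l <+ w := by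
  obtain ⟨l₁, l₂, hl, h₁, h₂⟩ := sublist_append_iff.mp h
  cases l₁ with
  | nil =>
    rw [nil_append] at hl
    exact cons_sublist_cons.mp (hl ▸ h₂)
  | cons b l₁ =>
    obtain ⟨rfl, -⟩ := cons_eq_cons.mp hl
    exact absurd (h₁.subset mem_cons_self) ha

theorem Sublist.of_append_singleton_sublist_append_cons {a : α} {l v w : List α}
    (h : l ++ [a] <+ v ++ a :: w) (ha : a ∉ w) : l <+ v := by
  have h' : a :: l.reverse <+ w.reverse ++ a :: v.reverse := by simpa using h.reverse
  simpa using h'.of_cons_sublist_append_cons (by simpa using ha)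

variable [DecidableEq α]

theorem exists_eq_append_cons_of_forall_mem {S : Finset α} {u : List α} (hS : S.Nonempty)
    (hu : ∀ s ∈ S, s ∈ u) :
    ∃ v a w, u = v ++ a :: w ∧ a ∈ S ∧ a ∉ v ∧ ∀ s ∈ S.erase a, s ∈ v := by
  obtain ⟨a, haS, hmax⟩ := S.exists_max_image u.idxOf hS
  have hi : u.idxOf a < u.length := idxOf_lt_length_of_mem (hu a haS)
  refine ⟨u.take (u.idxOf a), a, u.drop (u.idxOf a + 1), ?_, haS, ?_, fun s hs => ?_⟩
  · conv_lhs => rw [← take_append_drop (u.idxOf a) u, ← getElem_cons_drop hi, getElem_idxOf hi]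
  · rw [mem_take_iff_idxOf_lt (hu a haS)]
    exact lt_irrefl _
  · obtain ⟨hsa, hsS⟩ := Finset.mem_erase.mp hs
    rw [mem_take_iff_idxOf_lt (hu s hsS)]
    exact (hmax s hsS).lt_of_ne fun h => hsa ((idxOf_inj (hu s hsS)).mp h)

theorem sum_count_le_length (S : Finset α) (u : List α) : ∑ x ∈ S, u.count x ≤ u.length :=
  calc ∑ x ∈ S, u.count x ≤ ∑ x ∈ S ∪ u.toFinset, u.count x :=
        Finset.sum_le_sum_of_subset Finset.subset_union_left
    _ = u.length := by
        simpa using Multiset.sum_count_eq_card (s := S ∪ u.toFinset) (m := (u : Multiset α))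
          (by simp +contextual)

theorem card_le_sum_count {S : Finset α} {u : List α} (hu : ∀ s ∈ S, s ∈ u) :
    S.card ≤ ∑ x ∈ S, u.count x := by
  rw [Finset.card_eq_sum_ones]
  exact Finset.sum_le_sum fun x hx => count_pos_iff.mpr (hu x hx)

theorem sum_count_append_cons {S : Finset α} {a : α} (ha : a ∈ S) (v w : List α) :
    ∑ x ∈ S, (v ++ a :: w).count x = ∑ x ∈ S, v.count x + ∑ x ∈ S, w.count x + 1 := by
  simp [count_append, count_cons, Finset.sum_add_distrib, ha, add_assoc]

end List

namespace KComplete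

variable {A : Finset ℕ} {k : ℕ} {u : List ℕ}

theorem mono {B : Finset ℕ} (hBA : B ⊆ A) (hu : KComplete A k u) : KComplete B k u :=
  fun π hπ hlen hmem => hu π hπ hlen fun x hx => hBA (hmem x hx)

theorem mem (hu : KComplete A k u) (hk : 1 ≤ k) (hkA : k ≤ A.card) {x : ℕ} (hx : x ∈ A) :
    x ∈ u := by
  obtain ⟨T, hxT, hTA, hT⟩ := Finset.exists_subsuperset_card_eq
    (Finset.singleton_subset_iff.mpr hx) (by simpa using hk) hkA
  have hTu := hu T.toList T.nodup_toList (by simp [hT]) fun y hy => hTA (Finset.mem_toList.mp hy)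
  exact hTu.subset (Finset.mem_toList.mpr (hxT (Finset.mem_singleton_self x)))

theorem erase_right {v w : List ℕ} {a : ℕ} (hu : KComplete A (k + 1) (v ++ a :: w))
    (ha : a ∈ A) (hav : a ∉ v) : KComplete (A.erase a) k w := by
  intro π hπ hlen hmem
  have haπ : a ∉ π := fun h => Finset.notMem_erase a A (hmem a h)
  refine (hu (a :: π) (List.nodup_cons.mpr ⟨haπ, hπ⟩) (by simp [hlen]) ?_
    ).of_cons_sublist_append_cons hav
  intro x hx
  rcases List.mem_cons.mp hx with rfl | hx
  exacts [ha, Finset.mem_of_mem_erase (hmem x hx)]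

theorem erase_left {v w : List ℕ} {a : ℕ} (hu : KComplete A (k + 1) (v ++ a :: w))
    (ha : a ∈ A) (haw : a ∉ w) : KComplete (A.erase a) k v := by
  intro π hπ hlen hmem
  have haπ : a ∉ π := fun h => Finset.notMem_erase a A (hmem a h)
  refine (hu (π ++ [a]) ?_ (by simp [hlen]) ?_).of_append_singleton_sublist_append_cons haw
  · simpa [List.nodup_append, hπ] using fun x hx (hxa : x = a) => haπ (hxa ▸ hx)
  · intro x hx
    rcases List.mem_append.mp hx with hx | hx
    exacts [Finset.mem_of_mem_erase (hmem x hx), List.mem_singleton.mp hx ▸ ha]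

theorem exists_le_count (hu : KComplete A k u) (hkA : k < A.card) : ∃ y ∈ A, k ≤ u.count y := by
  induction k generalizing A u with
  | zero =>
    obtain ⟨y, hy⟩ := Finset.card_pos.mp hkA
    exact ⟨y, hy, Nat.zero_le _⟩
  | succ k ih =>
    obtain ⟨v, a, w, rfl, haA, hav, hv⟩ := List.exists_eq_append_cons_of_forall_mem
      (Finset.card_pos.mp (by omega)) fun x hx => hu.mem k.succ_pos hkA.le hx
    have hcard : k < (A.erase a).card := by rw [Finset.card_erase_of_mem haA]; omega
    obtain ⟨y, hy, hky⟩ := ih (hu.erase_right haA hav) hcard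
    refine ⟨y, Finset.mem_of_mem_erase hy, ?_⟩
    have hyv := List.count_pos_iff.mpr (hv y hy)
    rw [List.count_append, List.count_cons_of_ne (Finset.ne_of_mem_erase hy).symm]
    omega

end KComplete

def KCompleteLowerBound (k m : ℕ) : Prop :=
  ∀ (B : Finset ℕ) (v : List ℕ), B.card = k → KComplete B k v → m ≤ ∑ x ∈ B, v.count x

namespace KCompleteLowerBound

variable {k m : ℕ}

theorem succ (h : KCompleteLowerBound k m) :
    KCompleteLowerBound (k + 1) (min (2 * m + 1) (m + k + 2)) := by
  intro B u hB hu
  obtain ⟨v, a, w, rfl, haB, hav, hv⟩ := List.exists_eq_append_cons_of_forall_mem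
    (Finset.card_pos.mp (by omega)) fun x hx => hu.mem k.succ_pos hB.ge hx
  have hcard : (B.erase a).card = k := by rw [Finset.card_erase_of_mem haB, hB]; rfl
  have hw : m ≤ ∑ x ∈ B.erase a, w.count x := h _ _ hcard (hu.erase_right haB hav)
  have hsum (l : List ℕ) : ∑ x ∈ B.erase a, l.count x + l.count a = ∑ x ∈ B, l.count x :=
    Finset.sum_erase_add _ _ haB
  rw [List.sum_count_append_cons haB]
  by_cases haw : a ∈ w
  · have hv' := List.card_le_sum_count hv
    have haw' := List.count_pos_iff.mpr haw
    have := hsum v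
    have := hsum w
    omega
  · have hv' : m ≤ ∑ x ∈ B.erase a, v.count x := h _ _ hcard (hu.erase_left haB haw)
    have := hsum v
    have := hsum w
    omega

theorem le_sum_count (h : KCompleteLowerBound k m) {A : Finset ℕ} {u : List ℕ}
    (hkA : k ≤ A.card) (hu : KComplete A k u) : m + k * (A.card - k) ≤ ∑ x ∈ A, u.count x := by
  obtain ⟨d, hd⟩ := Nat.exists_eq_add_of_le hkA
  rw [hd, Nat.add_sub_cancel_left]
  clear hkA
  induction d generalizing A with
  | zero => simpa using h A u hd hu
  | succ d ih =>
    obtain ⟨y, hyA, hy⟩ := hu.exists_le_count (by omega)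
    have hrest := ih (hu.mono (A.erase_subset y)) (by rw [Finset.card_erase_of_mem hyA, hd]; rfl)
    rw [← Finset.add_sum_erase _ _ hyA, Nat.mul_succ]
    omega

end KCompleteLowerBound

theorem kCompleteLowerBound_four_twelve : KCompleteLowerBound 4 12 := by
  have h₀ : KCompleteLowerBound 0 0 := fun _ _ _ _ => Nat.zero_le _
  simpa using h₀.succ.succ.succ.succ

theorem stmt_10_general (A : Finset ℕ) (σ : List ℕ) (segs : List (List ℕ))
    (hcard : 4 ≤ A.card) (hseg : IsSegmentation A σ segs) :
    4 * A.card - 4 ≤ ((segs.take 4).flatten).length := by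
  have hu : KComplete A 4 ((segs.take 4).flatten) := (hseg.2.2 4 (by norm_num) hcard).1
  have := kCompleteLowerBound_four_twelve.le_sum_count hcard hu
  have := List.sum_count_le_length A ((segs.take 4).flatten)
  omega

/-- In a minimum-length supersequence over a set of `n ≥ 4` letters, the first
four segments have total length at least `4n - 4`. -/
theorem stmt_10 (A : Finset ℕ) (σ : List ℕ) (segs : List (List ℕ))
    (hcard : 4 ≤ A.card) (hσ : IsSupseq A σ)
    (hmin : ∀ τ : List ℕ, IsSupseq A τ → σ.length ≤ τ.length)
    (hseg : IsSegmentation A σ segs) :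
    4 * A.card - 4 ≤ ((segs.take 4).flatten).length :=
  stmt_10_general A σ segs hcard hseg
end

section
/- In any minimum-length supersequence over a set of 3 letters (length 7), the multiset of letter frequencies is one of {4,2,1}, {3,3,1}, or {3,2,2}. -/
/-!
Every letter of `A` occurs in a supersequence `σ`. For distinct letters `u`, `v`, both `uv` and
`vu` are subsequences of `σ`, so one of `u`, `v` occurs at least twice. Hence the three letter
frequencies are positive, sum to `7`, and at most one of them equals `1`; the only such multisets
are `{4,2,1}`, `{3,3,1}` and `{3,2,2}`.
-/

theorem List.two_le_count_or_two_le_count_of_sublist_of_sublist {α : Type*} [BEq α]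
    [LawfulBEq α] {b c : α} (hbc : b ≠ c) :
    ∀ {l : List α}, [b, c].Sublist l → [c, b].Sublist l → 2 ≤ l.count b ∨ 2 ≤ l.count c
  | [], h, _ => by simp at h
  | d :: l, hbc_sub, hcb_sub => by
    cases hbc_sub with
    | cons_cons _ _ =>
      cases hcb_sub with
      | cons_cons _ _ => exact absurd rfl hbc
      | cons _ hcb =>
        have : 0 < l.count b := List.count_pos_iff.mpr (hcb.subset (by simp))
        left; rw [List.count_cons_self]; omega
    | cons _ hbc_tail =>
      cases hcb_sub with
      | cons_cons _ _ =>
        have : 0 < l.count c := List.count_pos_iff.mpr (hbc_tail.subset (by simp))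
        right; rw [List.count_cons_self]; omega
      | cons _ hcb =>
        exact (two_le_count_or_two_le_count_of_sublist_of_sublist hbc hbc_tail hcb).imp
          (·.trans List.count_le_count_cons) (·.trans List.count_le_count_cons)

namespace IsSupseq

variable {A : Finset ℕ} {σ : List ℕ}

theorem pair_sublist (hσ : IsSupseq A σ) {u v : ℕ} (hu : u ∈ A) (hv : v ∈ A) (huv : u ≠ v) :
    [u, v].Sublist σ := by
  have hperm : IsPermSeq A ([u, v] ++ ((A.erase u).erase v).toList) := by
    refine ⟨?_, ?_⟩
    · simp [huv, Finset.nodup_toList]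
    · simp only [List.cons_append, List.nil_append, List.toFinset_cons, Finset.toList_toFinset]
      rw [Finset.insert_erase (Finset.mem_erase.2 ⟨huv.symm, hv⟩), Finset.insert_erase hu]
  exact (List.sublist_append_left _ _).trans (hσ.2 _ hperm)

theorem mem (hσ : IsSupseq A σ) {u : ℕ} (hu : u ∈ A) : u ∈ σ :=
  (hσ.2 A.toList ⟨A.nodup_toList, A.toList_toFinset⟩).subset (by simpa using hu)

theorem sum_count (hσ : IsSupseq A σ) : ∑ a ∈ A, σ.count a = σ.length := by
  simpa using Multiset.sum_count_eq_card (m := (σ : Multiset ℕ)) (by simpa using hσ.1)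

theorem two_le_count_or_two_le_count (hσ : IsSupseq A σ) {u v : ℕ} (hu : u ∈ A) (hv : v ∈ A)
    (huv : u ≠ v) : 2 ≤ σ.count u ∨ 2 ≤ σ.count v :=
  List.two_le_count_or_two_le_count_of_sublist_of_sublist huv
    (hσ.pair_sublist hu hv huv) (hσ.pair_sublist hv hu huv.symm)

end IsSupseq

theorem multiset_triple_of_sum_eq_seven {x y z : ℕ} (hsum : x + y + z = 7)
    (hx : 1 ≤ x) (hy : 1 ≤ y) (hz : 1 ≤ z)
    (hxy : 2 ≤ x ∨ 2 ≤ y) (hxz : 2 ≤ x ∨ 2 ≤ z) (hyz : 2 ≤ y ∨ 2 ≤ z) :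
    ({x, y, z} : Multiset ℕ) = {4, 2, 1} ∨
    ({x, y, z} : Multiset ℕ) = {3, 3, 1} ∨
    ({x, y, z} : Multiset ℕ) = {3, 2, 2} := by
  obtain rfl : z = 7 - x - y := by omega
  have : x ≤ 5 := by omega
  have : y ≤ 5 := by omega
  interval_cases x <;> interval_cases y <;> first | omega | decide

/-- In a minimum-length supersequence over 3 letters (length 7), the multiset
of letter frequencies is {4,2,1}, {3,3,1} or {3,2,2}. -/
theorem stmt_14 (A : Finset ℕ) (σ : List ℕ) (hA : A.card = 3)
    (hσ : IsSupseq A σ) (hlen : σ.length = 7) :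
    A.val.map (fun a => σ.count a) = ({4, 2, 1} : Multiset ℕ) ∨
    A.val.map (fun a => σ.count a) = ({3, 3, 1} : Multiset ℕ) ∨
    A.val.map (fun a => σ.count a) = ({3, 2, 2} : Multiset ℕ) := by
  obtain ⟨a, b, c, hab, hac, hbc, rfl⟩ := Finset.card_eq_three.mp hA
  have hsum : σ.count a + σ.count b + σ.count c = 7 := by
    rw [← hlen, ← hσ.sum_count, Finset.sum_insert (by simp [hab, hac]),
      Finset.sum_pair hbc, add_assoc]
  have hpos : ∀ u ∈ ({a, b, c} : Finset ℕ), 1 ≤ σ.count u :=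
    fun u hu => List.count_pos_iff.mpr (hσ.mem hu)
  have hmap : ({a, b, c} : Finset ℕ).val.map (fun u => σ.count u) =
      {σ.count a, σ.count b, σ.count c} := by
    simp [hab, hac, hbc, Multiset.insert_eq_cons]
  rw [hmap]
  exact multiset_triple_of_sum_eq_seven hsum (hpos a (by simp)) (hpos b (by simp)) (hpos c (by simp))
    (hσ.two_le_count_or_two_le_count (by simp) (by simp) hab)
    (hσ.two_le_count_or_two_le_count (by simp) (by simp) hac)
    (hσ.two_le_count_or_two_le_count (by simp) (by simp) hbc)
end

section
/- The sequence over {1,...,7} formed by concatenating ⟨1,2,3,4,5,6,7⟩, ⟨1,2,3,4,5,6⟩, ⟨1,7,2,3,4,5⟩, ⟨1,6,2,3,7,4⟩, ⟨1,5,6,2,3⟩, ⟨1,4,7,5,6,2⟩, ⟨3,1,4⟩ is a supersequence over {1,...,7} of length 39 in which the letter 7 occurs exactly 4 times. -/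
/-!
A list contains every permutation of the letters `l` as a subsequence iff, for every first letter
`x`, the part of it after the first occurrence of `x` contains every permutation of `l.erase x`;
the greedy leftmost embedding loses nothing. This turns the claim into a finite recursion over
the `7! = 5040` orders of `{1, …, 7}`, checked by evaluation.
-/

namespace List

variable {α : Type*} [DecidableEq α]

theorem cons_sublist_of_mem_of_sublist_tail_dropWhile {x : α} {l σ : List α} (hx : x ∈ σ)
    (hl : l <+ (σ.dropWhile (· ≠ x)).tail) : x :: l <+ σ := by
  induction σ with
  | nil => simp at hx
  | cons y σ ih =>
    by_cases hyx : y = x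
    · subst hyx
      simpa using hl
    · have hxσ : x ∈ σ := (mem_cons.mp hx).resolve_left (Ne.symm hyx)
      simp only [dropWhile_cons, ne_eq, hyx, not_false_eq_true, decide_true, if_true] at hl
      exact (ih hxσ hl).cons y

/-- `n` is fuel: the test fails when `n < l.length`. -/
def allPermsSublistB : ℕ → List α → List α → Bool
  | 0, l, _ => l.isEmpty
  | n + 1, l, σ => l.all fun x =>
      x ∈ σ && allPermsSublistB n (l.erase x) (σ.dropWhile (· ≠ x)).tail

theorem sublist_of_allPermsSublistB {n : ℕ} {l σ : List α} (h : allPermsSublistB n l σ)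
    {π : List α} (hπ : π ~ l) : π <+ σ := by
  induction n generalizing l σ π with
  | zero =>
    simp only [allPermsSublistB, isEmpty_iff] at h
    subst h
    simp [perm_nil.mp hπ]
  | succ n ih =>
    rcases π with _ | ⟨x, π⟩
    · exact nil_sublist σ
    have hxl : x ∈ l := hπ.mem_iff.mp mem_cons_self
    obtain ⟨hxσ, hrest⟩ : x ∈ σ ∧ allPermsSublistB n (l.erase x) (σ.dropWhile (· ≠ x)).tail := by
      simpa using all_eq_true.mp h x hxl
    exact cons_sublist_of_mem_of_sublist_tail_dropWhile hxσ
      (ih hrest ((perm_cons x).mp (hπ.trans (perm_cons_erase hxl))))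

end List

theorem isSupseq_of_allPermsSublistB {A : Finset ℕ} {σ l : List ℕ} (hσ : ∀ x ∈ σ, x ∈ A)
    (hl : l.Nodup) (hlA : l.toFinset = A) (h : List.allPermsSublistB l.length l σ) :
    IsSupseq A σ := by
  refine ⟨hσ, fun π ⟨hπ, hπA⟩ => List.sublist_of_allPermsSublistB h ?_⟩
  exact List.perm_of_nodup_nodup_toFinset_eq hπ hl (hπA.trans hlA.symm)

/-- An explicit length-39 supersequence over {1,...,7} in which the letter 7
occurs exactly 4 times. -/
theorem stmt_16 :
    IsSupseq (Finset.Icc 1 7)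
      ([1,2,3,4,5,6,7] ++ [1,2,3,4,5,6] ++ [1,7,2,3,4,5] ++ [1,6,2,3,7,4] ++
        [1,5,6,2,3] ++ [1,4,7,5,6,2] ++ [3,1,4]) ∧
    ([1,2,3,4,5,6,7] ++ [1,2,3,4,5,6] ++ [1,7,2,3,4,5] ++ [1,6,2,3,7,4] ++
        [1,5,6,2,3] ++ [1,4,7,5,6,2] ++ [3,1,4] : List ℕ).length = 39 ∧
    ([1,2,3,4,5,6,7] ++ [1,2,3,4,5,6] ++ [1,7,2,3,4,5] ++ [1,6,2,3,7,4] ++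
        [1,5,6,2,3] ++ [1,4,7,5,6,2] ++ [3,1,4] : List ℕ).count 7 = 4 :=
  ⟨isSupseq_of_allPermsSublistB (l := [1,2,3,4,5,6,7]) (by decide) (by decide) (by decide)
    (by decide), by decide, by decide⟩
end
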